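/- arXiv:1812.00850 — 3 statements merged into one kernel-verified Lean document; each statement's English description precedes it below -/
import Mathlib

section
/- (Necessity of A_p for the maximal function.) Let d ≥ 1, 1 < p < ∞, and let w be a weight on ℝ^d. Suppose there is a constant C > 0 such that ‖Mf‖_{L^p(w)} ≤ C‖f‖_{L^p(w)} for all f ∈ L^p(w). Then w ∈ A_p, and moreover [w]_{A_p} ≤ C^p. -/
open MeasureTheory ENNReal

noncomputable section

/-- An axis-parallel cube in `ℝ^d`. -/
def IsCube {d : ℕ} (Q : Set (Fin d → ℝ)) : Prop :=
  ∃ (a : Fin d → ℝ) (l : ℝ), 0 < l ∧ Q = {x | ∀ i, a i ≤ x i ∧ x i < a i + l}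

/-- The average of `f` over the set `Q` (with respect to Lebesgue measure). -/
def avg {d : ℕ} (Q : Set (Fin d → ℝ)) (f : (Fin d → ℝ) → ℝ) : ℝ :=
  (volume Q).toReal⁻¹ * ∫ x in Q, f x

/-- A weight: locally integrable and a.e. positive. -/
def IsWeight {d : ℕ} (w : (Fin d → ℝ) → ℝ) : Prop :=
  MeasureTheory.LocallyIntegrable w volume ∧
    ∀ᵐ x ∂(volume : Measure (Fin d → ℝ)), 0 < w x

/-- Muckenhoupt `A_p` characteristic of `w`, as a supremum over all axis-parallel cubes. -/
def apConst (d : ℕ) (p : ℝ) (w : (Fin d → ℝ) → ℝ) : ℝ≥0∞ :=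
  ⨆ Q : {Q : Set (Fin d → ℝ) // IsCube Q},
    ENNReal.ofReal (avg Q.1 w * (avg Q.1 fun x => (w x) ^ (-(1/(p-1)))) ^ (p-1))

/-- Weighted `L^p` norm `(∫ |f|^p w)^(1/p)` as an extended nonnegative real. -/
def wLpNorm {d : ℕ} (p : ℝ) (w f : (Fin d → ℝ) → ℝ) : ℝ≥0∞ :=
  (∫⁻ x, ENNReal.ofReal |f x| ^ p * ENNReal.ofReal (w x)) ^ (1/p)

/-- Hardy–Littlewood maximal function over axis-parallel cubes. -/
def maxFn {d : ℕ} (f : (Fin d → ℝ) → ℝ) (x : Fin d → ℝ) : ℝ≥0∞ :=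
  ⨆ Q : {Q : Set (Fin d → ℝ) // IsCube Q ∧ x ∈ Q},
    ENNReal.ofReal (avg Q.1 fun y => |f y|)

/-- The standard dyadic cube of generation `j` indexed by `k`. -/
def dyadicCube (d : ℕ) (j : ℤ) (k : Fin d → ℤ) : Set (Fin d → ℝ) :=
  {x | ∀ i, (k i : ℝ) * (2:ℝ) ^ (-j) ≤ x i ∧ x i < ((k i : ℝ) + 1) * (2:ℝ) ^ (-j)}

/-- The dyadic maximal function over standard dyadic cubes. -/
def dyadicMaxFn {d : ℕ} (f : (Fin d → ℝ) → ℝ) (x : Fin d → ℝ) : ℝ≥0∞ :=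
  ⨆ jk : {jk : ℤ × (Fin d → ℤ) // x ∈ dyadicCube d jk.1 jk.2},
    ENNReal.ofReal (avg (dyadicCube d jk.1.1 jk.1.2) fun y => |f y|)

/-!
Test the bound on `f = σ 𝟙_Q` with `σ = w ^ (-1/(p-1))`. Since `σ ^ p * w = σ`, the weighted
norm is `‖f‖ ^ p = σ(Q)`, while `M f ≥ ⟨σ⟩_Q` on `Q`; hence `⟨σ⟩_Q ^ p * w(Q) ≤ C ^ p * σ(Q)`.
Writing `w(Q) = |Q| ⟨w⟩_Q`, `σ(Q) = |Q| ⟨σ⟩_Q` and dividing by `|Q| ⟨σ⟩_Q` leaves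
`⟨w⟩_Q * ⟨σ⟩_Q ^ (p-1) ≤ C ^ p`.
-/

open Set

def HasWeightedMaximalBound {d : ℕ} (p : ℝ) (w : (Fin d → ℝ) → ℝ) (C : ℝ) : Prop :=
  ∀ f : (Fin d → ℝ) → ℝ, Measurable f → wLpNorm p w f < ⊤ →
    (∫⁻ x, (maxFn f x) ^ p * ENNReal.ofReal (w x)) ^ (1/p) ≤ ENNReal.ofReal C * wLpNorm p w f

def dualWeight {d : ℕ} (p : ℝ) (w : (Fin d → ℝ) → ℝ) (x : Fin d → ℝ) : ℝ :=
  w x ^ (-(1/(p-1)))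

lemma rpow_neg_one_div_sub_one_rpow_mul_self {x p : ℝ} (hx : 0 < x) (hp : p ≠ 1) :
    (x ^ (-(1/(p-1)))) ^ p * x = x ^ (-(1/(p-1))) := by
  have hp1 : p - 1 ≠ 0 := sub_ne_zero.mpr hp
  rw [← Real.rpow_mul hx.le, ← Real.rpow_add_one hx.ne']
  congr 1
  field_simp
  ring

namespace IsCube

variable {d : ℕ} {Q : Set (Fin d → ℝ)}

lemma eq_pi_Ico (hQ : IsCube Q) :
    ∃ (a : Fin d → ℝ) (l : ℝ), 0 < l ∧ Q = univ.pi fun i => Ico (a i) (a i + l) := by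
  obtain ⟨a, l, hl, rfl⟩ := hQ
  exact ⟨a, l, hl, by ext x; simp [Set.mem_pi]⟩

lemma measurableSet (hQ : IsCube Q) : MeasurableSet Q := by
  obtain ⟨a, l, -, rfl⟩ := hQ.eq_pi_Ico
  exact MeasurableSet.univ_pi fun _ => measurableSet_Ico

lemma volume_eq (hQ : IsCube Q) : ∃ l : ℝ, 0 < l ∧ volume Q = ENNReal.ofReal l ^ d := by
  obtain ⟨a, l, hl, rfl⟩ := hQ.eq_pi_Ico
  exact ⟨l, hl, by simp [volume_pi_pi, Real.volume_Ico]⟩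

lemma volume_ne_zero (hQ : IsCube Q) : volume Q ≠ 0 := by
  obtain ⟨l, hl, hV⟩ := hQ.volume_eq
  rw [hV]
  exact pow_ne_zero _ (ENNReal.ofReal_pos.mpr hl).ne'

lemma volume_ne_top (hQ : IsCube Q) : volume Q ≠ ⊤ := by
  obtain ⟨l, -, hV⟩ := hQ.volume_eq
  rw [hV]
  exact ENNReal.pow_ne_top ENNReal.ofReal_ne_top

lemma integrableOn {f : (Fin d → ℝ) → ℝ} (hQ : IsCube Q) (hf : LocallyIntegrable f) :
    IntegrableOn f Q := by
  obtain ⟨a, l, -, rfl⟩ := hQ.eq_pi_Ico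
  exact (hf.integrableOn_isCompact (isCompact_univ_pi fun _ => isCompact_Icc)).mono_set
    (pi_mono fun _ _ => Ico_subset_Icc_self)

end IsCube

section Averages

variable {d : ℕ} {Q : Set (Fin d → ℝ)} {f : (Fin d → ℝ) → ℝ}

lemma avg_nonneg (hf : 0 ≤ᵐ[volume.restrict Q] f) : 0 ≤ avg Q f :=
  mul_nonneg (by positivity) (integral_nonneg_of_ae hf)

lemma avg_congr_ae {g : (Fin d → ℝ) → ℝ} (h : f =ᵐ[volume.restrict Q] g) : avg Q f = avg Q g := by
  rw [avg, avg, integral_congr_ae h]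

lemma setLIntegral_ofReal_eq_volume_mul_avg (hQ0 : volume Q ≠ 0) (hQ : volume Q ≠ ⊤)
    (hf : IntegrableOn f Q) (hf0 : 0 ≤ᵐ[volume.restrict Q] f) :
    ∫⁻ x in Q, ENNReal.ofReal (f x) = volume Q * ENNReal.ofReal (avg Q f) := by
  have hV : 0 < (volume Q).toReal := ENNReal.toReal_pos hQ0 hQ
  rw [avg, ENNReal.ofReal_mul (by positivity), ENNReal.ofReal_inv_of_pos hV,
    ENNReal.ofReal_toReal hQ, ← mul_assoc, ENNReal.mul_inv_cancel hQ0 hQ, one_mul,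
    ofReal_integral_eq_lintegral_ofReal hf hf0]

end Averages

section MaximalFunction

variable {d : ℕ} {f g : (Fin d → ℝ) → ℝ}

lemma ofReal_avg_le_maxFn {Q : Set (Fin d → ℝ)} {x : Fin d → ℝ} (hQ : IsCube Q) (hx : x ∈ Q) :
    ENNReal.ofReal (avg Q fun y => |f y|) ≤ maxFn f x :=
  le_iSup_of_le (⟨Q, hQ, hx⟩ : {Q : Set (Fin d → ℝ) // IsCube Q ∧ x ∈ Q}) le_rfl

lemma maxFn_congr_ae (h : f =ᵐ[volume] g) : maxFn f = maxFn g := by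
  have habs : (fun y => |f y|) =ᵐ[volume] fun y => |g y| := h.fun_comp abs
  ext x
  simp only [maxFn, avg_congr_ae (ae_restrict_of_ae habs)]

lemma wLpNorm_congr_ae {p : ℝ} {w : (Fin d → ℝ) → ℝ} (h : f =ᵐ[volume] g) :
    wLpNorm p w f = wLpNorm p w g := by
  unfold wLpNorm
  congr 1
  exact lintegral_congr_ae (h.mono fun x hx => by simp only [hx])

end MaximalFunction

namespace HasWeightedMaximalBound

variable {d : ℕ} {p C : ℝ} {w : (Fin d → ℝ) → ℝ}

lemma of_aemeasurable (hb : HasWeightedMaximalBound p w C) {f : (Fin d → ℝ) → ℝ}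
    (hf : AEMeasurable f) (hfin : wLpNorm p w f < ⊤) :
    (∫⁻ x, (maxFn f x) ^ p * ENNReal.ofReal (w x)) ^ (1/p) ≤ ENNReal.ofReal C * wLpNorm p w f := by
  rw [maxFn_congr_ae hf.ae_eq_mk, wLpNorm_congr_ae hf.ae_eq_mk] at *
  exact hb _ hf.measurable_mk hfin

lemma ofReal_avg_rpow_mul_le (hb : HasWeightedMaximalBound p w C) (hp : 0 < p)
    {Q : Set (Fin d → ℝ)} (hQ : IsCube Q) {f : (Fin d → ℝ) → ℝ} (hf : AEMeasurable f)
    (hfin : wLpNorm p w f < ⊤) :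
    ENNReal.ofReal (avg Q fun y => |f y|) ^ p * ∫⁻ x in Q, ENNReal.ofReal (w x)
      ≤ ENNReal.ofReal C ^ p * ∫⁻ x, ENNReal.ofReal |f x| ^ p * ENNReal.ofReal (w x) := by
  calc ENNReal.ofReal (avg Q fun y => |f y|) ^ p * ∫⁻ x in Q, ENNReal.ofReal (w x)
      = ∫⁻ x in Q, ENNReal.ofReal (avg Q fun y => |f y|) ^ p * ENNReal.ofReal (w x) :=
        (lintegral_const_mul' _ _ (ENNReal.rpow_ne_top_of_nonneg hp.le ENNReal.ofReal_ne_top)).symm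
    _ ≤ ∫⁻ x in Q, maxFn f x ^ p * ENNReal.ofReal (w x) := by
        refine setLIntegral_mono' hQ.measurableSet fun x hx => ?_
        gcongr
        exact ofReal_avg_le_maxFn hQ hx
    _ ≤ ∫⁻ x, maxFn f x ^ p * ENNReal.ofReal (w x) := setLIntegral_le_lintegral _ _
    _ ≤ (ENNReal.ofReal C * wLpNorm p w f) ^ p := by
        simpa [← ENNReal.rpow_mul, inv_mul_cancel₀ hp.ne'] using
          ENNReal.rpow_le_rpow (hb.of_aemeasurable hf hfin) hp.le
    _ = ENNReal.ofReal C ^ p * ∫⁻ x, ENNReal.ofReal |f x| ^ p * ENNReal.ofReal (w x) := by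
        rw [ENNReal.mul_rpow_of_nonneg _ _ hp.le, wLpNorm, ← ENNReal.rpow_mul,
          one_div_mul_cancel hp.ne', ENNReal.rpow_one]

end HasWeightedMaximalBound

lemma ENNReal.mul_rpow_sub_one_le_of_rpow_mul_le {A B V K : ℝ≥0∞} {p : ℝ} (hp : 1 < p)
    (hV0 : V ≠ 0) (hV : V ≠ ⊤) (hA : A ≠ ⊤) (h : A ^ p * (V * B) ≤ K * (V * A)) :
    B * A ^ (p - 1) ≤ K := by
  rcases eq_or_ne A 0 with rfl | hA0
  · simp [ENNReal.zero_rpow_of_pos (sub_pos.mpr hp)]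
  have hsplit : A ^ p = A ^ (p - 1) * A := by
    conv_lhs => rw [← sub_add_cancel p 1, ENNReal.rpow_add _ _ hA0 hA, ENNReal.rpow_one]
  rw [← ENNReal.mul_le_mul_iff_left (mul_ne_zero hV0 hA0) (ENNReal.mul_ne_top hV hA)]
  calc B * A ^ (p - 1) * (V * A) = A ^ p * (V * B) := by rw [hsplit]; ring
    _ ≤ K * (V * A) := h

section DualWeight

variable {d : ℕ} {p : ℝ} {w : (Fin d → ℝ) → ℝ} {Q : Set (Fin d → ℝ)}

lemma dualWeight_pos {x : Fin d → ℝ} (hx : 0 < w x) : 0 < dualWeight p w x :=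
  Real.rpow_pos_of_pos hx _

lemma avg_abs_indicator_dualWeight (hQ : MeasurableSet Q) (hw : ∀ᵐ x, 0 < w x) :
    avg Q (fun y => |Q.indicator (dualWeight p w) y|) = avg Q (dualWeight p w) := by
  refine avg_congr_ae ?_
  filter_upwards [self_mem_ae_restrict hQ, ae_restrict_of_ae hw] with x hxQ hx
  rw [indicator_of_mem hxQ, abs_of_pos (dualWeight_pos hx)]

lemma lintegral_abs_indicator_dualWeight_rpow_mul (hp : 1 < p) (hQ : MeasurableSet Q)
    (hw : ∀ᵐ x, 0 < w x) :
    ∫⁻ x, ENNReal.ofReal |Q.indicator (dualWeight p w) x| ^ p * ENNReal.ofReal (w x)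
      = ∫⁻ x in Q, ENNReal.ofReal (dualWeight p w x) := by
  rw [← lintegral_indicator hQ]
  refine lintegral_congr_ae (hw.mono fun x hx => ?_)
  by_cases hxQ : x ∈ Q
  · dsimp only
    rw [indicator_of_mem hxQ, indicator_of_mem hxQ, abs_of_pos (dualWeight_pos hx),
      ENNReal.ofReal_rpow_of_pos (dualWeight_pos hx),
      ← ENNReal.ofReal_mul (Real.rpow_nonneg (dualWeight_pos hx).le _), dualWeight,
      rpow_neg_one_div_sub_one_rpow_mul_self hx hp.ne']
  · simp [indicator_of_notMem hxQ, ENNReal.zero_rpow_of_pos (zero_lt_one.trans hp)]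

end DualWeight

lemma HasWeightedMaximalBound.ofReal_avg_mul_avg_dualWeight_rpow_le {d : ℕ} {p C : ℝ}
    {w : (Fin d → ℝ) → ℝ} (hb : HasWeightedMaximalBound p w C) (hp : 1 < p) (hC : 0 < C)
    (hw : IsWeight w) {Q : Set (Fin d → ℝ)} (hQ : IsCube Q) :
    ENNReal.ofReal (avg Q w * avg Q (dualWeight p w) ^ (p - 1)) ≤ ENNReal.ofReal (C ^ p) := by
  by_cases hσ : IntegrableOn (dualWeight p w) Q
  swap
  · -- The Bochner integral of a non-integrable function is `0`.
    have hjunk : avg Q (dualWeight p w) = 0 := by rw [avg, integral_undef hσ, mul_zero]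
    rw [hjunk, Real.zero_rpow (sub_pos.mpr hp).ne', mul_zero, ENNReal.ofReal_zero]
    exact zero_le
  have hσ0 : 0 ≤ᵐ[volume.restrict Q] dualWeight p w :=
    ae_restrict_of_ae (hw.2.mono fun x hx => (dualWeight_pos hx).le)
  have hw0 : 0 ≤ᵐ[volume.restrict Q] w := ae_restrict_of_ae (hw.2.mono fun x hx => hx.le)
  have hnorm : ∫⁻ x, ENNReal.ofReal |Q.indicator (dualWeight p w) x| ^ p * ENNReal.ofReal (w x)
      = volume Q * ENNReal.ofReal (avg Q (dualWeight p w)) :=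
    (lintegral_abs_indicator_dualWeight_rpow_mul hp hQ.measurableSet hw.2).trans
      (setLIntegral_ofReal_eq_volume_mul_avg hQ.volume_ne_zero hQ.volume_ne_top hσ hσ0)
  have hfin : wLpNorm p w (Q.indicator (dualWeight p w)) < ⊤ := by
    rw [wLpNorm, hnorm]
    exact ENNReal.rpow_lt_top_of_nonneg (by positivity)
      (ENNReal.mul_ne_top hQ.volume_ne_top ENNReal.ofReal_ne_top)
  have htest := hb.ofReal_avg_rpow_mul_le (zero_lt_one.trans hp) hQ
    ((aemeasurable_indicator_iff hQ.measurableSet).mpr hσ.aemeasurable) hfin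
  rw [avg_abs_indicator_dualWeight hQ.measurableSet hw.2, hnorm,
    setLIntegral_ofReal_eq_volume_mul_avg hQ.volume_ne_zero hQ.volume_ne_top
      (hQ.integrableOn hw.1) hw0] at htest
  calc ENNReal.ofReal (avg Q w * avg Q (dualWeight p w) ^ (p - 1))
      = ENNReal.ofReal (avg Q w) * ENNReal.ofReal (avg Q (dualWeight p w)) ^ (p - 1) := by
        rw [ENNReal.ofReal_mul (avg_nonneg hw0),
          ENNReal.ofReal_rpow_of_nonneg (avg_nonneg hσ0) (sub_pos.mpr hp).le]
    _ ≤ ENNReal.ofReal C ^ p :=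
        ENNReal.mul_rpow_sub_one_le_of_rpow_mul_le hp hQ.volume_ne_zero hQ.volume_ne_top
          ENNReal.ofReal_ne_top htest
    _ = ENNReal.ofReal (C ^ p) := ENNReal.ofReal_rpow_of_pos hC

theorem Ap_necessary_for_maximal_general (d : ℕ) (p : ℝ) (hp : 1 < p)
    (w : (Fin d → ℝ) → ℝ) (hw : IsWeight w) (C : ℝ) (hC : 0 < C)
    (hbound : ∀ f : (Fin d → ℝ) → ℝ, Measurable f → wLpNorm p w f < ⊤ →
      (∫⁻ x, (maxFn f x) ^ p * ENNReal.ofReal (w x)) ^ (1/p)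
        ≤ ENNReal.ofReal C * wLpNorm p w f) :
    apConst d p w ≤ ENNReal.ofReal (C ^ p) :=
  iSup_le fun Q => HasWeightedMaximalBound.ofReal_avg_mul_avg_dualWeight_rpow_le hbound hp hC hw Q.2

/-- **Necessity of `A_p` for the maximal function.** If
`‖Mf‖_{L^p(w)} ≤ C ‖f‖_{L^p(w)}` for all `f ∈ L^p(w)`, then `w ∈ A_p` with
`[w]_{A_p} ≤ C^p`. -/
theorem Ap_necessary_for_maximal (d : ℕ) (hd : 1 ≤ d) (p : ℝ) (hp : 1 < p)
    (w : (Fin d → ℝ) → ℝ) (hw : IsWeight w) (C : ℝ) (hC : 0 < C)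
    (hbound : ∀ f : (Fin d → ℝ) → ℝ, Measurable f → wLpNorm p w f < ⊤ →
      (∫⁻ x, (maxFn f x) ^ p * ENNReal.ofReal (w x)) ^ (1/p)
        ≤ ENNReal.ofReal C * wLpNorm p w f) :
    apConst d p w ≤ ENNReal.ofReal (C ^ p) :=
  Ap_necessary_for_maximal_general d p hp w hw C hC hbound

end
end

section
/- (Beznosova's Bellman function.) Let 𝔇 := {(u,v,l) ∈ ℝ³ : u > 0, v > 0, uv ≥ 1, 0 ≤ l ≤ 1} and define B(u,v,l) := u − 1/(v(1+l)). Then: (i) 0 ≤ B(u,v,l) ≤ u for all (u,v,l) ∈ 𝔇; (ii) (∂B/∂l)(u,v,l) ≥ 1/(4v) on 𝔇; (iii) the Hessian matrix d²B(u,v,l) is negative semidefinite at every point of 𝔇; and (iv) whenever x, x₊, x₋ ∈ 𝔇 satisfy x − (x₊ + x₋)/2 = (0,0,α) with α ≥ 0 and x = (u,v,l), one has B(x) − (B(x₊) + B(x₋))/2 ≥ α/(4v). -/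
/-!
(i) and (ii) are elementary bounds using `uv ≥ 1` and `1 + l ≤ 2`. For (iii), along a line the
denominator `P(s) = (v + sb)(1 + l + sc)` is a quadratic polynomial, and the second derivative of
`-1/P` at `0` is `(P P'' - 2P'²)/P³`, whose numerator is `-(X² + Y² + (X + Y)²)` with
`X = b(1 + l)`, `Y = vc`. For (iv), midpoint convexity of `1/(xy)` on the positive quadrant lets
the averaged point replace `x₊, x₋`; it differs from `x` only in `l`, which has moved down by `α`,
and `1/(v(s - α)) - 1/(vs) = α/(v s (s - α)) ≥ α/(4v)` since `s - α ≤ s ≤ 2`.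
-/

noncomputable section

open Filter Topology

/-- Beznosova's Bellman function `B(u,v,l) = u - 1/(v(1+l))`. -/
def bellmanB (u v l : ℝ) : ℝ := u - 1 / (v * (1 + l))

/-- The domain `𝔇 = {(u,v,l) : u,v > 0, uv ≥ 1, 0 ≤ l ≤ 1}`. -/
def bellmanDomain : Set (ℝ × ℝ × ℝ) :=
  {x | 0 < x.1 ∧ 0 < x.2.1 ∧ 1 ≤ x.1 * x.2.1 ∧ 0 ≤ x.2.2 ∧ x.2.2 ≤ 1}

lemma hasDerivAt_deriv_inv {P P' : ℝ → ℝ} {P'' x : ℝ} (hP : ∀ t, HasDerivAt P (P' t) t)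
    (hP' : HasDerivAt P' P'' x) (hx : P x ≠ 0) :
    HasDerivAt (deriv fun t => (P t)⁻¹) ((2 * P' x ^ 2 - P x * P'') / P x ^ 3) x := by
  have hev : deriv (fun t => (P t)⁻¹) =ᶠ[𝓝 x] fun t => -P' t / P t ^ 2 := by
    filter_upwards [(hP x).continuousAt.eventually_ne hx] with t ht
    exact ((hP t).inv ht).deriv
  refine HasDerivAt.congr_of_eventuallyEq
    ((hP'.neg.div ((hP x).pow 2) (pow_ne_zero 2 hx)).congr_deriv ?_) hev
  simp only [Pi.pow_apply, Pi.neg_apply]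
  field_simp
  ring

lemma one_div_mul_midpoint_le {a b c d : ℝ} (ha : 0 < a) (hb : 0 < b) (hc : 0 < c) (hd : 0 < d) :
    1 / ((a + c) / 2 * ((b + d) / 2)) ≤ (1 / (a * b) + 1 / (c * d)) / 2 := by
  rw [div_le_div_iff₀ (by positivity) (by norm_num), div_add_div _ _ (by positivity) (by positivity),
    div_mul_eq_mul_div, le_div_iff₀ (by positivity)]
  nlinarith [sq_nonneg (a * b - c * d), mul_nonneg (mul_nonneg hb.le hd.le) (sq_nonneg (a - c)),
    mul_nonneg (mul_nonneg ha.le hc.le) (sq_nonneg (b - d))]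

lemma div_four_mul_le_one_div_sub_one_div {v s α : ℝ} (hv : 0 < v) (hα : 0 ≤ α)
    (hsα : 0 < s - α) (hs : s ≤ 2) :
    α / (4 * v) ≤ 1 / (v * (s - α)) - 1 / (v * s) := by
  have hs_pos : 0 < s := by linarith
  have hprod : (s - α) * s ≤ 4 := by nlinarith
  calc α / (4 * v) ≤ α / (v * ((s - α) * s)) :=
        div_le_div_of_nonneg_left hα (by positivity) (by nlinarith)
    _ = 1 / (v * (s - α)) - 1 / (v * s) := by
        field_simp
        ring

section bellmanB

variable {u v l : ℝ}

lemma bellmanB_nonneg (hv : 0 < v) (huv : 1 ≤ u * v) (hl : 0 ≤ l) : 0 ≤ bellmanB u v l := by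
  have h₁ : 1 / (v * (1 + l)) ≤ 1 / v := one_div_le_one_div_of_le hv (by nlinarith)
  have h₂ : 1 / v ≤ u := by rw [div_le_iff₀ hv]; linarith
  unfold bellmanB
  linarith

lemma bellmanB_le (hv : 0 < v) (hl : 0 ≤ l) : bellmanB u v l ≤ u := by
  have : 0 < 1 / (v * (1 + l)) := by positivity
  unfold bellmanB
  linarith

lemma hasDerivAt_bellmanB_right (hv : v ≠ 0) (hl : 1 + l ≠ 0) :
    HasDerivAt (fun t => bellmanB u v t) (1 / (v * (1 + l) ^ 2)) l := by
  have hP : HasDerivAt (fun t : ℝ => v * (1 + t)) v l := by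
    simpa using ((hasDerivAt_id l).const_add 1).const_mul v
  refine ((hasDerivAt_const l u).sub ((hasDerivAt_const l (1 : ℝ)).div hP
    (mul_ne_zero hv hl))).congr_deriv ?_
  field_simp
  ring

lemma one_div_four_mul_le_deriv_bellmanB_right (hv : 0 < v) (hl₀ : 0 ≤ l) (hl₁ : l ≤ 1) :
    1 / (4 * v) ≤ deriv (fun t => bellmanB u v t) l := by
  rw [(hasDerivAt_bellmanB_right hv.ne' (by positivity)).deriv]
  have h4 : (1 + l) ^ 2 ≤ 4 := by nlinarith
  exact one_div_le_one_div_of_le (by positivity) (by nlinarith)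

lemma deriv_deriv_bellmanB_line_nonpos (a b c : ℝ) (h : 0 < v * (1 + l)) :
    deriv (fun t => deriv
      (fun s => bellmanB (u + s * a) (v + s * b) (l + s * c)) t) 0 ≤ 0 := by
  set P : ℝ → ℝ := fun s => (v + s * b) * (1 + (l + s * c)) with hP_def
  set P' : ℝ → ℝ := fun s => b * (1 + (l + s * c)) + (v + s * b) * c with hP'_def
  have hv : ∀ t, HasDerivAt (fun s : ℝ => v + s * b) b t := fun t => by
    simpa using ((hasDerivAt_id t).mul_const b).const_add v
  have hl : ∀ t, HasDerivAt (fun s : ℝ => 1 + (l + s * c)) c t := fun t => by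
    simpa using (((hasDerivAt_id t).mul_const c).const_add l).const_add 1
  have hP : ∀ t, HasDerivAt P (P' t) t := fun t => (hv t).mul (hl t)
  have hP' : HasDerivAt P' (2 * (b * c)) 0 :=
    (((hl 0).const_mul b).add ((hv 0).mul_const c)).congr_deriv (by ring)
  have hP0 : P 0 = v * (1 + l) := by simp [hP_def]
  have hline : (fun s => bellmanB (u + s * a) (v + s * b) (l + s * c))
      = fun s => u + s * a - (P s)⁻¹ := by
    funext s
    simp [bellmanB, hP_def]
  have hderiv : deriv (fun s => u + s * a - (P s)⁻¹) =ᶠ[𝓝 0]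
      fun t => a - deriv (fun s => (P s)⁻¹) t := by
    filter_upwards [(hP 0).continuousAt.eventually_ne (hP0 ▸ h.ne')] with t ht
    have hinv : HasDerivAt (fun s => (P s)⁻¹) (-P' t / P t ^ 2) t := (hP t).inv ht
    have haff : HasDerivAt (fun s => u + s * a) a t := by
      simpa using ((hasDerivAt_id t).mul_const a).const_add u
    rw [hinv.deriv]
    exact (haff.sub hinv).deriv
  rw [hline, (((hasDerivAt_deriv_inv hP hP' (hP0 ▸ h.ne')).const_sub a).congr_of_eventuallyEq
    hderiv).deriv, neg_nonpos]
  have hnum : 2 * P' 0 ^ 2 - P 0 * (2 * (b * c))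
      = (b * (1 + l)) ^ 2 + (v * c) ^ 2 + (b * (1 + l) + v * c) ^ 2 := by
    simp only [hP_def, hP'_def]
    ring
  rw [hnum, hP0]
  positivity

end bellmanB

/-- **Beznosova's Bellman function.** On `𝔇`:
(i) `0 ≤ B ≤ u`; (ii) `∂B/∂l ≥ 1/(4v)`; (iii) the Hessian of `B` is negative semidefinite,
expressed via second directional derivatives; (iv) the dyadic convexity property
`B(x) - (B(x₊)+B(x₋))/2 ≥ α/(4v)` whenever `x - (x₊+x₋)/2 = (0,0,α)` with `α ≥ 0`. -/
theorem beznosova_bellman_function :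
    (∀ u v l : ℝ, (u, v, l) ∈ bellmanDomain →
      0 ≤ bellmanB u v l ∧ bellmanB u v l ≤ u) ∧
    (∀ u v l : ℝ, (u, v, l) ∈ bellmanDomain →
      1 / (4 * v) ≤ deriv (fun t => bellmanB u v t) l) ∧
    (∀ x : ℝ × ℝ × ℝ, x ∈ bellmanDomain → ∀ h : ℝ × ℝ × ℝ,
      deriv (fun t => deriv
        (fun s => bellmanB (x.1 + s * h.1) (x.2.1 + s * h.2.1) (x.2.2 + s * h.2.2)) t) 0 ≤ 0) ∧
    (∀ u v l up vp lp um vm lm α : ℝ,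
      (u, v, l) ∈ bellmanDomain → (up, vp, lp) ∈ bellmanDomain →
      (um, vm, lm) ∈ bellmanDomain → 0 ≤ α →
      u - (up + um) / 2 = 0 → v - (vp + vm) / 2 = 0 → l - (lp + lm) / 2 = α →
      α / (4 * v) ≤ bellmanB u v l - (bellmanB up vp lp + bellmanB um vm lm) / 2) := by
  refine ⟨?_, ?_, ?_, ?_⟩
  · rintro u v l ⟨-, hv, huv, hl₀, -⟩
    exact ⟨bellmanB_nonneg hv huv hl₀, bellmanB_le hv hl₀⟩
  · rintro u v l ⟨-, hv, -, hl₀, hl₁⟩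
    exact one_div_four_mul_le_deriv_bellmanB_right hv hl₀ hl₁
  · rintro ⟨u, v, l⟩ ⟨-, hv, -, hl₀, -⟩ ⟨a, b, c⟩
    exact deriv_deriv_bellmanB_line_nonpos a b c (by positivity)
  · rintro u v l up vp lp um vm lm α ⟨-, hv, -, -, hl₁⟩ ⟨-, hvp, -, hlp, -⟩ ⟨-, hvm, -, hlm, -⟩
      hα hu_mid hv_mid hl_mid
    dsimp only at *
    have hconv := one_div_mul_midpoint_le hvp (by linarith : 0 < 1 + lp) hvm
      (by linarith : 0 < 1 + lm)
    rw [show (vp + vm) / 2 = v by linarith, show (1 + lp + (1 + lm)) / 2 = 1 + l - α by linarith]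
      at hconv
    have hgain := div_four_mul_le_one_div_sub_one_div hv hα (by linarith : 0 < 1 + l - α)
      (by linarith : 1 + l ≤ 2)
    simp only [bellmanB]
    linarith
end
end

section
/- (Verbitsky; Lerner–Nazarov.) Let Λ > 1 and let S be a family of standard dyadic cubes in ℝ^d. Then S is Λ-Carleson, i.e., ∑_{P∈S, P⊆Q} |P| ≤ Λ|Q| for every dyadic cube Q, if and only if S is (1/Λ)-sparse, i.e., there exist pairwise disjoint measurable sets E_Q ⊆ Q, one for each Q ∈ S, with |E_Q| ≥ (1/Λ)|Q|. -/
/-!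
Sparse implies Carleson because the sets `E_P`, `P ⊆ Q`, are disjoint subsets of `Q`.

For the converse, enumerate `S` and choose the sets one at a time, each of measure exactly
`|Q| / Λ`, keeping the Hall-type invariant that every cube `R` of `S` still has room outside the
sets chosen so far for `1 / Λ` times the total measure of the cubes of `S` inside `R` that are still
waiting. Only the laminar structure of the dyadic cubes and the fact that Lebesgue measure has
subsets of arbitrarily small positive measure matter. Choosing `E_Q` lowers the demand of a cube
containing `Q` by `|Q| / Λ` and its room by at most as much, so only the cubes inside `Q` constrain
`E_Q`. An admissible `E_Q` of maximal measure exists by exhaustion, and it cannot be too small: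
otherwise the saturated cubes (those with no spare room), whose maximal elements are disjoint,
cannot absorb all the free room of `Q`; since by Borel–Cantelli almost every point lies in finitely
many cubes of `S`, a small piece of positive measure can still be added.
-/

open MeasureTheory ENNReal

noncomputable section

/-- The standard dyadic cube with parameter pair `q = (j, k)`. -/
def dCube (d : ℕ) (q : ℤ × (Fin d → ℤ)) : Set (Fin d → ℝ) := dyadicCube d q.1 q.2

/-- A family `S` of standard dyadic cubes (given by parameters) is `η`-sparse if there are
pairwise disjoint measurable sets `E_Q ⊆ Q`, `Q ∈ S`, with `|E_Q| ≥ η |Q|`. -/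
def IsSparse (d : ℕ) (η : ℝ) (S : Set (ℤ × (Fin d → ℤ))) : Prop :=
  ∃ E : {q // q ∈ S} → Set (Fin d → ℝ),
    (∀ q, MeasurableSet (E q)) ∧ (∀ q, E q ⊆ dCube d q.1) ∧
    (∀ q r, q ≠ r → Disjoint (E q) (E r)) ∧
    (∀ q, ENNReal.ofReal η * volume (dCube d q.1) ≤ volume (E q))

theorem exists_seq_of_forall_exists_union {α : Type*} {P : ℕ → Set α → Prop}
    {R : ℕ → Set α → Set α → Prop} (h₀ : P 0 ∅)
    (hstep : ∀ n V, P n V → ∃ E, R n V E ∧ P (n + 1) (V ∪ E)) :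
    ∃ E : ℕ → Set α, ∀ n, R n (⋃ m < n, E m) (E n) := by
  choose! g hgR hgP using hstep
  let V : ℕ → Set α := fun n => Nat.rec ∅ (fun n W => W ∪ g n W) n
  have hV (n : ℕ) : V n = ⋃ m < n, g m (V m) ∧ P n (V n) := by
    induction n with
    | zero => simpa [V] using h₀
    | succ n ih => exact ⟨by rw [Set.biUnion_lt_succ, ← ih.1], hgP n _ ih.2⟩
  exact ⟨fun n => g n (V n), fun n => by rw [← (hV n).1]; exact hgR n _ (hV n).2⟩

section Exhaustion

open Set

variable {X : Type*} [MeasurableSpace X] {μ : Measure X}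

theorem exists_maximal_measure {P : Set X → Prop} {E₀ : Set X} (h₀ : P E₀) {c : ℝ≥0∞}
    (hc : c ≠ ∞) (hle : ∀ E, P E → μ E ≤ c)
    (hunion : ∀ F : ℕ → Set X, Monotone F → (∀ n, P (F n)) → P (⋃ n, F n)) :
    ∃ E, P E ∧ ∀ E', P E' → E ⊆ E' → μ E' ≤ μ E := by
  -- `τ E` is the best measure reachable from `E`; each step gets at least halfway there.
  let τ : Set X → ℝ≥0∞ := fun E => ⨆ E' : {E' // P E' ∧ E ⊆ E'}, μ E'.1
  have hτ_ne_top (E : Set X) : τ E ≠ ∞ := ne_top_of_le_ne_top hc (iSup_le fun E' => hle _ E'.2.1)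
  have hstep (E : {E // P E}) : ∃ E' : {E // P E}, E.1 ⊆ E'.1 ∧ μ E.1 + τ E.1 ≤ 2 * μ E'.1 := by
    by_contra! h
    have hτ : τ E.1 ≤ μ E.1 := by
      refine ENNReal.le_of_add_le_add_right (hτ_ne_top E.1) ?_
      rw [← two_mul, ENNReal.mul_iSup]
      exact iSup_le fun E' => (h ⟨E'.1, E'.2.1⟩ E'.2.2).le
    exact (h E subset_rfl).not_ge (by rw [two_mul]; gcongr)
  choose g hg_sub hg_le using hstep
  let F : ℕ → {E // P E} := fun n => g^[n] ⟨E₀, h₀⟩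
  have hF_succ (n : ℕ) : F (n + 1) = g (F n) := Function.iterate_succ_apply' g n _
  have hF_mono : Monotone fun n => (F n).1 :=
    monotone_nat_of_le_succ fun n => by rw [hF_succ]; exact hg_sub _
  have hP : P (⋃ n, (F n).1) := hunion _ hF_mono fun n => (F n).2
  refine ⟨⋃ n, (F n).1, hP, fun E' hE' hsub => ?_⟩
  have hbound (n : ℕ) : μ (F n).1 + μ E' ≤ μ (⋃ n, (F n).1) + μ (⋃ n, (F n).1) := calc
    μ (F n).1 + μ E' ≤ μ (F n).1 + τ (F n).1 := by
      gcongr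
      exact le_iSup (fun E'' : {E'' // P E'' ∧ (F n).1 ⊆ E''} => μ E''.1)
        ⟨E', hE', (subset_iUnion (fun n => (F n).1) n).trans hsub⟩
    _ ≤ 2 * μ (F (n + 1)).1 := by rw [hF_succ]; exact hg_le _
    _ ≤ μ (⋃ n, (F n).1) + μ (⋃ n, (F n).1) := by
      rw [← two_mul]
      gcongr
      exact subset_iUnion (fun n => (F n).1) (n + 1)
  refine ENNReal.le_of_add_le_add_left (ne_top_of_le_ne_top hc (hle _ hP)) ?_
  conv_lhs => rw [hF_mono.measure_iUnion, ENNReal.iSup_add]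
  exact iSup_le hbound

theorem measure_diff_le_diff_union_add (A U W : Set X) :
    μ (A \ U) ≤ μ (A \ (U ∪ W)) + μ W := by
  rw [← sdiff_sdiff]
  calc μ (A \ U) ≤ μ ((A \ U) \ W ∪ W) := measure_mono fun x hx => by
        by_cases hxW : x ∈ W
        · exact Or.inr hxW
        · exact Or.inl ⟨hx, hxW⟩
    _ ≤ μ ((A \ U) \ W) + μ W := measure_union_le _ _

end Exhaustion

section LaminarCover

open Set

variable {X ι : Type*} {C : ι → Set X}

theorem exists_pairwiseDisjoint_cover
    (hlam : ∀ p q, C p ⊆ C q ∨ C q ⊆ C p ∨ Disjoint (C p) (C q)) {s : Set ι}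
    (hfin : ∀ q ∈ s, {p | p ∈ s ∧ C q ⊆ C p}.Finite) :
    ∃ M ⊆ C '' s, M.PairwiseDisjoint id ∧ ∀ q ∈ s, ∃ A ∈ M, C q ⊆ A := by
  refine ⟨{A | Maximal (· ∈ C '' s) A}, fun A hA => hA.prop, ?_, fun q hq => ?_⟩
  · rintro A hA B hB hAB
    obtain ⟨p, -, rfl⟩ := hA.prop
    obtain ⟨r, -, rfl⟩ := hB.prop
    rcases hlam p r with h | h | h
    · exact absurd (hA.eq_of_le hB.prop h) hAB
    · exact absurd (hB.eq_of_le hA.prop h).symm hAB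
    · exact h
  · have hup : {A | A ∈ C '' s ∧ C q ⊆ A}.Finite :=
      ((hfin q hq).image C).subset fun _ ⟨⟨p, hp, hpA⟩, hqA⟩ => ⟨p, ⟨hp, hpA ▸ hqA⟩, hpA⟩
    obtain ⟨A, hqA, hA⟩ := hup.exists_le_maximal ⟨mem_image_of_mem C hq, subset_rfl⟩
    exact ⟨A, ⟨hA.prop.1, fun B hB hAB => hA.2 ⟨hB, hqA.trans hAB⟩ hAB⟩, hqA⟩

end LaminarCover

section LaminarFamily

open Set Function

variable {X ι : Type*} [MeasurableSpace X]

def HasSmallSubsets (μ : Measure X) : Prop :=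
  ∀ A, MeasurableSet A → μ A ≠ 0 → ∀ ε ≠ 0, ∃ W ⊆ A, MeasurableSet W ∧ μ W ≠ 0 ∧ μ W ≤ ε

structure IsLaminarFamily (μ : Measure X) (C : ι → Set X) : Prop where
  measurableSet : ∀ p, MeasurableSet (C p)
  measure_ne_top : ∀ p, μ (C p) ≠ ∞
  subset_or_subset_or_disjoint : ∀ p q, C p ⊆ C q ∨ C q ⊆ C p ∨ Disjoint (C p) (C q)

def massWithin (μ : Measure X) (C : ι → Set X) (T : Set ι) (B : Set X) : ℝ≥0∞ :=
  ∑' p, {p | p ∈ T ∧ C p ⊆ B}.indicator (fun p => μ (C p)) p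

variable {μ : Measure X} {C : ι → Set X} {η : ℝ≥0∞} {T T' : Set ι} {B B' U V E : Set X} {i : ι}

theorem massWithin_mono (hT : T ⊆ T') (hB : B ⊆ B') :
    massWithin μ C T B ≤ massWithin μ C T' B' :=
  ENNReal.tsum_le_tsum fun p => indicator_le_indicator_of_subset
    (fun _ hp => ⟨hT hp.1, hp.2.trans hB⟩ : {p | p ∈ T ∧ C p ⊆ B} ⊆ {p | p ∈ T' ∧ C p ⊆ B'})
    (fun _ => zero_le) p

theorem massWithin_univ (B : Set X) :
    massWithin μ C univ B = ∑' p : {p // C p ⊆ B}, μ (C p) := by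
  simp only [massWithin, mem_univ, true_and]
  exact (tsum_subtype {p | C p ⊆ B} fun p => μ (C p)).symm

theorem massWithin_eq_add_diff_singleton (hi : i ∈ T) (hiB : C i ⊆ B) :
    massWithin μ C T B = μ (C i) + massWithin μ C (T \ {i}) B := by
  rw [massWithin, ENNReal.tsum_eq_add_tsum_ite i, indicator_of_mem (show i ∈ {p | p ∈ T ∧ C p ⊆ B}
    from ⟨hi, hiB⟩)]
  congr 1
  refine tsum_congr fun p => ?_
  by_cases hp : p = i
  · simp [hp]
  rw [if_neg hp]
  by_cases hpB : p ∈ {p | p ∈ T ∧ C p ⊆ B}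
  · rw [indicator_of_mem hpB, indicator_of_mem (show p ∈ {p | p ∈ T \ {i} ∧ C p ⊆ B}
      from ⟨⟨hpB.1, hp⟩, hpB.2⟩)]
  · rw [indicator_of_notMem hpB, indicator_of_notMem (show p ∉ {p | p ∈ T \ {i} ∧ C p ⊆ B}
      from fun h => hpB ⟨h.1.1, h.2⟩)]

theorem massWithin_ne_top (h : η * massWithin μ C T B ≤ μ B) (hη : η ≠ 0) (hB : μ B ≠ ∞) :
    massWithin μ C T B ≠ ∞ := by
  intro htop
  rw [htop, ENNReal.mul_top hη] at h
  exact hB (top_le_iff.1 h)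

theorem tsum_massWithin_le {κ : Type*} {B : κ → Set X} (hB : Pairwise (Disjoint on B)) :
    ∑' a, massWithin μ C T (B a) ≤ massWithin μ C T (⋃ a, B a) := by
  simp only [massWithin]
  rw [ENNReal.tsum_comm]
  refine ENNReal.tsum_le_tsum fun p => ?_
  rcases (C p).eq_empty_or_nonempty with hp | ⟨x, hx⟩
  · refine (ENNReal.tsum_eq_zero.2 fun a => ?_).trans_le zero_le
    exact indicator_apply_eq_zero.2 fun _ => by rw [hp, measure_empty]
  by_cases ha : ∃ a, p ∈ T ∧ C p ⊆ B a
  · obtain ⟨a, -, hpa⟩ := ha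
    rw [tsum_eq_single a fun b hba => indicator_of_notMem
      (fun hb => disjoint_left.1 (hB hba) (hb.2 hx) (hpa hx)) _]
    exact indicator_le_indicator_of_subset (fun _ hp => ⟨hp.1, hp.2.trans (subset_iUnion B a)⟩ :
      {p | p ∈ T ∧ C p ⊆ B a} ⊆ {p | p ∈ T ∧ C p ⊆ ⋃ a, B a}) (fun _ => zero_le) p
  · refine (ENNReal.tsum_eq_zero.2 fun a => indicator_of_notMem
      (show p ∉ {p | p ∈ T ∧ C p ⊆ B a} from fun h => ha ⟨a, h⟩) _).trans_le zero_le

theorem finite_setOf_subset_subset {q : ι} (hfin : massWithin μ C univ (C i) ≠ ∞)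
    (hq : μ (C q) ≠ 0) : {p | C q ⊆ C p ∧ C p ⊆ C i}.Finite :=
  (ENNReal.finite_const_le_of_tsum_ne_top hfin hq).subset fun p hp => by
    rw [mem_ofPred_eq, indicator_of_mem (show p ∈ {p | p ∈ univ ∧ C p ⊆ C i} from ⟨trivial, hp.2⟩)]
    exact measure_mono hp.1

def saturated (μ : Measure X) (C : ι → Set X) (η : ℝ≥0∞) (T : Set ι) (U : Set X) (i : ι) :
    Set ι :=
  {q | C q ⊆ C i ∧ μ (C q) ≠ 0 ∧ μ (C q \ U) ≤ η * massWithin μ C T (C q)}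

theorem measure_biUnion_saturated_le [Countable ι] (hC : IsLaminarFamily μ C)
    (hfin : massWithin μ C univ (C i) ≠ ∞) :
    μ (⋃ q ∈ saturated μ C η T U i, C q \ U) ≤ η * massWithin μ C T (C i) := by
  obtain ⟨M, hMs, hMdisj, hcover⟩ := exists_pairwiseDisjoint_cover
    hC.subset_or_subset_or_disjoint (s := saturated μ C η T U i)
    fun q hq => (finite_setOf_subset_subset hfin hq.2.1).subset fun p hp => ⟨hp.2, hp.1.1⟩
  have : Countable M := ((countable_range C).mono ((hMs.trans (image_subset_range _ _)))).to_subtype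
  have hsat (A : M) : A.1 ⊆ C i ∧ μ (A.1 \ U) ≤ η * massWithin μ C T A.1 := by
    obtain ⟨q, hq, hqA⟩ := hMs A.2
    exact hqA ▸ ⟨hq.1, hq.2.2⟩
  calc μ (⋃ q ∈ saturated μ C η T U i, C q \ U) ≤ μ (⋃ A : M, A.1 \ U) :=
        measure_mono <| iUnion₂_subset fun q hq => by
          obtain ⟨A, hA, hqA⟩ := hcover q hq
          exact (sdiff_subset_sdiff_left hqA).trans (subset_iUnion (fun A : M => A.1 \ U) ⟨A, hA⟩)
    _ ≤ ∑' A : M, μ (A.1 \ U) := measure_iUnion_le _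
    _ ≤ ∑' A : M, η * massWithin μ C T A.1 := ENNReal.tsum_le_tsum fun A => (hsat A).2
    _ = η * ∑' A : M, massWithin μ C T A.1 := ENNReal.tsum_mul_left
    _ ≤ η * massWithin μ C T (C i) := by
      gcongr
      refine (tsum_massWithin_le fun A B hAB => ?_).trans
        (massWithin_mono subset_rfl (iUnion_subset fun A => (hsat A).1))
      exact hMdisj A.2 B.2 (Subtype.coe_injective.ne hAB)

def gapSet (μ : Measure X) (C : ι → Set X) (η : ℝ≥0∞) (T : Set ι) (U : Set X) (i : ι)
    (δ : ℝ≥0∞) : Set X :=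
  (C i \ U) \ ⋃ q ∈ {q | C q ⊆ C i ∧ μ (C q \ U) < η * massWithin μ C T (C q) + δ}, C q

theorem measurableSet_gapSet [Countable ι] (hC : IsLaminarFamily μ C) (hU : MeasurableSet U)
    (δ : ℝ≥0∞) : MeasurableSet (gapSet μ C η T U i δ) :=
  ((hC.measurableSet i).diff hU).diff (.biUnion (to_countable _) fun q _ => hC.measurableSet q)

theorem exists_mem_gapSet {x : X} (hx : x ∈ C i \ U)
    (hfinx : {q | x ∈ C q ∧ C q ⊆ C i}.Finite)
    (hgap : ∀ q, x ∈ C q → C q ⊆ C i → η * massWithin μ C T (C q) < μ (C q \ U)) :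
    ∃ k : ℕ, x ∈ gapSet μ C η T U i (k : ℝ≥0∞)⁻¹ := by
  have hk (q : ι) : ∃ k : ℕ, x ∈ C q → C q ⊆ C i →
      η * massWithin μ C T (C q) + (k : ℝ≥0∞)⁻¹ ≤ μ (C q \ U) := by
    by_cases hq : x ∈ C q ∧ C q ⊆ C i
    · have hlt := hgap q hq.1 hq.2
      obtain ⟨k, hk⟩ := ENNReal.exists_inv_nat_lt (tsub_pos_of_lt hlt).ne'
      refine ⟨k, fun _ _ => ?_⟩
      calc η * massWithin μ C T (C q) + (k : ℝ≥0∞)⁻¹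
          ≤ η * massWithin μ C T (C q) + (μ (C q \ U) - η * massWithin μ C T (C q)) := by
            gcongr
        _ = μ (C q \ U) := add_tsub_cancel_of_le hlt.le
    · exact ⟨0, fun h₁ h₂ => (hq ⟨h₁, h₂⟩).elim⟩
  choose k hk using hk
  obtain ⟨K, hK⟩ := (hfinx.image k).bddAbove
  refine ⟨K, hx, fun hxU => ?_⟩
  obtain ⟨q, ⟨hqi, hlt⟩, hxq⟩ := mem_iUnion₂.1 hxU
  have hKq : (K : ℝ≥0∞)⁻¹ ≤ (k q : ℝ≥0∞)⁻¹ :=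
    ENNReal.inv_le_inv.2 (Nat.cast_le.2 (hK ⟨q, ⟨hxq, hqi⟩, rfl⟩))
  exact hlt.not_ge ((add_le_add le_rfl hKq).trans (hk q hxq hqi))

theorem exists_measure_gapSet_ne_zero [Countable ι] (hC : IsLaminarFamily μ C)
    (hfin : massWithin μ C univ (C i) ≠ ∞) (hdef : η * massWithin μ C T (C i) < μ (C i \ U)) :
    ∃ k : ℕ, μ (gapSet μ C η T U i (k : ℝ≥0∞)⁻¹) ≠ 0 := by
  by_contra! hgap
  let N := {x | ¬{p : {p // C p ⊆ C i} | x ∈ C p}.Finite}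
  let Z := ⋃ q ∈ {q | μ (C q) = 0}, C q
  have hnull : μ (N ∪ Z ∪ ⋃ k : ℕ, gapSet μ C η T U i (k : ℝ≥0∞)⁻¹) = 0 := by
    refine measure_union_null (measure_union_null ?_ ?_) (measure_iUnion_null hgap)
    · exact ae_iff.1 (ae_finite_setOfPred_mem (by rwa [← massWithin_univ]))
    · exact (measure_biUnion_null_iff (to_countable _)).2 fun q hq => hq
  have hcover : C i \ U ⊆ (⋃ q ∈ saturated μ C η T U i, C q \ U) ∪
      (N ∪ Z ∪ ⋃ k : ℕ, gapSet μ C η T U i (k : ℝ≥0∞)⁻¹) := by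
    intro x hx
    by_contra! hxc
    simp only [mem_union, not_or] at hxc
    obtain ⟨hxS, ⟨hxN, hxZ⟩, hxG⟩ := hxc
    have hfinx : {q | x ∈ C q ∧ C q ⊆ C i}.Finite :=
      ((not_not.1 hxN).image Subtype.val).subset fun q hq => ⟨⟨q, hq.2⟩, hq.1, rfl⟩
    obtain ⟨k, hk⟩ := exists_mem_gapSet hx hfinx fun q hxq hqi => lt_of_not_ge fun hle =>
      hxS (mem_iUnion₂.2 ⟨q, ⟨hqi, fun h0 => hxZ (mem_iUnion₂.2 ⟨q, h0, hxq⟩), hle⟩, hxq, hx.2⟩)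
    exact hxG (mem_iUnion.2 ⟨k, hk⟩)
  refine hdef.not_ge ?_
  calc μ (C i \ U) ≤ μ (⋃ q ∈ saturated μ C η T U i, C q \ U) + 0 :=
        hnull ▸ (measure_mono hcover).trans (measure_union_le _ _)
    _ ≤ η * massWithin μ C T (C i) := by rw [add_zero]; exact measure_biUnion_saturated_le hC hfin

theorem exists_augmenting_set [Countable ι] (hC : IsLaminarFamily μ C) (hsmall : HasSmallSubsets μ)
    (hU : MeasurableSet U) (hfin : massWithin μ C univ (C i) ≠ ∞)
    (hdef : η * massWithin μ C T (C i) < μ (C i \ U)) {ε : ℝ≥0∞} (hε : ε ≠ 0) :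
    ∃ W ⊆ C i \ U, MeasurableSet W ∧ μ W ≠ 0 ∧ μ W ≤ ε ∧ ∀ q, C q ⊆ C i → (C q ∩ W).Nonempty →
      η * massWithin μ C T (C q) + μ W ≤ μ (C q \ U) := by
  obtain ⟨k, hk⟩ := exists_measure_gapSet_ne_zero hC hfin hdef
  obtain ⟨W, hWG, hWm, hW0, hWle⟩ := hsmall _ (measurableSet_gapSet hC hU _) hk (min ε (k : ℝ≥0∞)⁻¹)
    (lt_min (pos_iff_ne_zero.2 hε) (ENNReal.inv_pos.2 (natCast_ne_top k))).ne'
  refine ⟨W, hWG.trans sdiff_subset, hWm, hW0, hWle.trans (min_le_left _ _),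
    fun q hqi ⟨x, hxq, hxW⟩ => ?_⟩
  have hroom : ¬μ (C q \ U) < η * massWithin μ C T (C q) + (k : ℝ≥0∞)⁻¹ :=
    fun hlt => (hWG hxW).2 (mem_iUnion₂.2 ⟨q, ⟨hqi, hlt⟩, hxq⟩)
  calc η * massWithin μ C T (C q) + μ W ≤ η * massWithin μ C T (C q) + (k : ℝ≥0∞)⁻¹ := by
        gcongr
        exact hWle.trans (min_le_right _ _)
    _ ≤ μ (C q \ U) := not_lt.1 hroom

def IsAdmissible (μ : Measure X) (C : ι → Set X) (η : ℝ≥0∞) (T : Set ι) (V : Set X) (i : ι)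
    (E : Set X) : Prop :=
  MeasurableSet E ∧ E ⊆ C i \ V ∧ μ E ≤ η * μ (C i) ∧
    ∀ q, C q ⊆ C i → η * massWithin μ C T (C q) ≤ μ (C q \ (V ∪ E))

theorem IsAdmissible.iUnion (hC : IsLaminarFamily μ C) (hV : MeasurableSet V) {F : ℕ → Set X}
    (hF : Monotone F) (hadm : ∀ n, IsAdmissible μ C η T V i (F n)) :
    IsAdmissible μ C η T V i (⋃ n, F n) := by
  refine ⟨.iUnion fun n => (hadm n).1, iUnion_subset fun n => (hadm n).2.1, ?_, fun q hq => ?_⟩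
  · rw [hF.measure_iUnion]
    exact iSup_le fun n => (hadm n).2.2.1
  · have hanti : Antitone fun n => C q \ (V ∪ F n) :=
      fun m n hmn => sdiff_subset_sdiff_right (union_subset_union_right V (hF hmn))
    rw [union_iUnion, sdiff_iUnion, hanti.measure_iInter
      (fun n => ((hC.measurableSet q).diff (hV.union (hadm n).1)).nullMeasurableSet)
      ⟨0, ne_top_of_le_ne_top (hC.measure_ne_top q) (measure_mono sdiff_subset)⟩]
    exact le_iInf fun n => (hadm n).2.2.2 q hq

theorem IsAdmissible.exists_measure_gt [Countable ι] (hC : IsLaminarFamily μ C)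
    (hsmall : HasSmallSubsets μ) (hpack : η * massWithin μ C univ (C i) ≤ μ (C i))
    (hV : MeasurableSet V) (hroom : η * μ (C i) + η * massWithin μ C T (C i) ≤ μ (C i \ V))
    (hE : IsAdmissible μ C η T V i E) (hlt : μ E < η * μ (C i)) :
    ∃ E', IsAdmissible μ C η T V i E' ∧ E ⊆ E' ∧ μ E < μ E' := by
  obtain ⟨hEm, hEsub, -, hEroom⟩ := hE
  have hη : η ≠ 0 := by rintro rfl; simp at hlt
  have hroom_top : μ (C i \ V) ≠ ∞ :=
    ne_top_of_le_ne_top (hC.measure_ne_top i) (measure_mono sdiff_subset)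
  have htarget_top : η * μ (C i) ≠ ∞ := ne_top_of_le_ne_top hroom_top (le_self_add.trans hroom)
  have hEtop : μ E ≠ ∞ := ne_top_of_le_ne_top htarget_top hlt.le
  have hdef : η * massWithin μ C T (C i) < μ (C i \ (V ∪ E)) := by
    refine lt_of_not_ge fun hle => hlt.not_ge (ENNReal.le_of_add_le_add_right
      (ne_top_of_le_ne_top hroom_top (le_add_self.trans hroom)) ?_)
    calc η * μ (C i) + η * massWithin μ C T (C i) ≤ μ (C i \ V) := hroom
      _ ≤ μ (C i \ (V ∪ E)) + μ E := measure_diff_le_diff_union_add _ _ _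
      _ ≤ μ E + η * massWithin μ C T (C i) := by rw [add_comm]; gcongr
  obtain ⟨W, hWsub, hWm, hW0, hWle, hWroom⟩ := exists_augmenting_set hC hsmall (hV.union hEm)
    (massWithin_ne_top hpack hη (hC.measure_ne_top i)) hdef (tsub_pos_of_lt hlt).ne'
  have hWtop : μ W ≠ ∞ := ne_top_of_le_ne_top htarget_top (hWle.trans tsub_le_self)
  have hdisj : Disjoint E W := disjoint_left.2 fun x hxE hxW => (hWsub hxW).2 (Or.inr hxE)
  refine ⟨E ∪ W, ⟨hEm.union hWm, union_subset hEsub fun x hx => ⟨(hWsub hx).1,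
    fun hxV => (hWsub hx).2 (Or.inl hxV)⟩, ?_, fun q hq => ?_⟩, subset_union_left, ?_⟩
  · calc μ (E ∪ W) ≤ μ E + μ W := measure_union_le _ _
      _ ≤ μ E + (η * μ (C i) - μ E) := by gcongr
      _ = η * μ (C i) := add_tsub_cancel_of_le hlt.le
  · rw [← union_assoc]
    rcases (C q ∩ W).eq_empty_or_nonempty with hqW | hqW
    · rw [← sdiff_sdiff,
        sdiff_eq_left.2 ((disjoint_iff_inter_eq_empty.2 hqW).mono_left sdiff_subset)]
      exact hEroom q hq
    · refine ENNReal.le_of_add_le_add_right hWtop ((hWroom q hq hqW).trans ?_)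
      exact measure_diff_le_diff_union_add _ _ _
  · rw [measure_union hdisj hWm]
    exact ENNReal.lt_add_right hEtop hW0

/-- The invariant of the construction: `T` are the members still waiting for their sets and `V` is
the union of the sets chosen so far. -/
def HasRoom (μ : Measure X) (C : ι → Set X) (η : ℝ≥0∞) (T : Set ι) (V : Set X) : Prop :=
  ∀ q, η * massWithin μ C T (C q) ≤ μ (C q \ V)

theorem HasRoom.exists_admissible_eq [Countable ι] (hC : IsLaminarFamily μ C)
    (hsmall : HasSmallSubsets μ) (hpack : ∀ q, η * massWithin μ C univ (C q) ≤ μ (C q))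
    (hV : MeasurableSet V) (hroom : HasRoom μ C η T V) (hi : i ∈ T) :
    ∃ E, IsAdmissible μ C η (T \ {i}) V i E ∧ μ E = η * μ (C i) := by
  have hroom_i : η * μ (C i) + η * massWithin μ C (T \ {i}) (C i) ≤ μ (C i \ V) := by
    simpa only [massWithin_eq_add_diff_singleton hi subset_rfl, mul_add] using hroom i
  have hc : η * μ (C i) ≠ ∞ :=
    ne_top_of_le_ne_top (ne_top_of_le_ne_top (hC.measure_ne_top i) (measure_mono sdiff_subset))
      (le_self_add.trans hroom_i)
  have h₀ : IsAdmissible μ C η (T \ {i}) V i ∅ := ⟨.empty, empty_subset _, by simp, fun q _ => by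
    rw [union_empty]
    exact (mul_le_mul' le_rfl (massWithin_mono sdiff_subset subset_rfl)).trans (hroom q)⟩
  obtain ⟨E, hE, hmax⟩ := exists_maximal_measure h₀ hc (fun E hE => hE.2.2.1)
    fun F hF h => IsAdmissible.iUnion hC hV hF h
  refine ⟨E, hE, le_antisymm hE.2.2.1 (not_lt.1 fun hlt => ?_)⟩
  obtain ⟨E', hE', hEE', hlt'⟩ := hE.exists_measure_gt hC hsmall (hpack i) hV hroom_i hlt
  exact (hmax E' hE' hEE').not_gt hlt'

theorem HasRoom.exists_step [Countable ι] (hC : IsLaminarFamily μ C) (hsmall : HasSmallSubsets μ)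
    (hpack : ∀ q, η * massWithin μ C univ (C q) ≤ μ (C q)) (hV : MeasurableSet V)
    (hroom : HasRoom μ C η T V) (hi : i ∈ T) :
    ∃ E, MeasurableSet E ∧ E ⊆ C i \ V ∧ μ E = η * μ (C i) ∧ HasRoom μ C η (T \ {i}) (V ∪ E) := by
  obtain ⟨E, ⟨hEm, hEsub, -, hbelow⟩, hμE⟩ := hroom.exists_admissible_eq hC hsmall hpack hV hi
  refine ⟨E, hEm, hEsub, hμE, fun q => ?_⟩
  rcases hC.subset_or_subset_or_disjoint q i with hqi | hiq | hdisj
  · exact hbelow q hqi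
  · have hEtop : μ E ≠ ∞ :=
      ne_top_of_le_ne_top (hC.measure_ne_top i) (measure_mono (hEsub.trans sdiff_subset))
    refine ENNReal.le_of_add_le_add_left hEtop ?_
    calc μ E + η * massWithin μ C (T \ {i}) (C q) = η * massWithin μ C T (C q) := by
          rw [massWithin_eq_add_diff_singleton hi hiq, mul_add, hμE]
      _ ≤ μ (C q \ V) := hroom q
      _ ≤ μ (C q \ (V ∪ E)) + μ E := measure_diff_le_diff_union_add _ _ _
      _ = μ E + μ (C q \ (V ∪ E)) := add_comm _ _
  · rw [← sdiff_sdiff,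
      sdiff_eq_left.2 ((hdisj.mono_left sdiff_subset).mono_right (hEsub.trans sdiff_subset))]
    exact (mul_le_mul' le_rfl (massWithin_mono sdiff_subset subset_rfl)).trans (hroom q)

theorem HasRoom.exists_next_stage [Countable ι] (hC : IsLaminarFamily μ C)
    (hsmall : HasSmallSubsets μ) (hpack : ∀ q, η * massWithin μ C univ (C q) ≤ μ (C q))
    {f : ι → ℕ} (hf : Injective f) {n : ℕ} (hV : MeasurableSet V)
    (hroom : HasRoom μ C η {p | n ≤ f p} V) :
    ∃ E, (MeasurableSet E ∧ ∀ i, f i = n → E ⊆ C i \ V ∧ η * μ (C i) ≤ μ E) ∧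
      MeasurableSet (V ∪ E) ∧ HasRoom μ C η {p | n + 1 ≤ f p} (V ∪ E) := by
  by_cases hn : ∃ i, f i = n
  · obtain ⟨i, rfl⟩ := hn
    obtain ⟨E, hEm, hEsub, hμE, hroom'⟩ := hroom.exists_step hC hsmall hpack hV (le_refl (f i))
    have hT : {p | f i + 1 ≤ f p} = {p | f i ≤ f p} \ {i} := by
      ext p
      simp [lt_iff_le_and_ne, hf.ne_iff, eq_comm]
    exact ⟨E, ⟨hEm, fun j hj => hf hj ▸ ⟨hEsub, hμE.ge⟩⟩, hV.union hEm, hT ▸ hroom'⟩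
  · have hT : {p | n + 1 ≤ f p} = {p | n ≤ f p} := by
      ext p
      exact ⟨fun h => (Nat.le_succ n).trans h, fun h => lt_of_le_of_ne h fun h' => hn ⟨p, h'.symm⟩⟩
    exact ⟨∅, ⟨.empty, fun i hi => (hn ⟨i, hi⟩).elim⟩, by rw [union_empty, hT]; exact ⟨hV, hroom⟩⟩

theorem exists_disjoint_subsets_of_packing [Countable ι] (hC : IsLaminarFamily μ C)
    (hsmall : HasSmallSubsets μ) (hpack : ∀ q, η * massWithin μ C univ (C q) ≤ μ (C q)) :
    ∃ E : ι → Set X, (∀ i, MeasurableSet (E i)) ∧ (∀ i, E i ⊆ C i) ∧ Pairwise (Disjoint on E) ∧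
      ∀ i, η * μ (C i) ≤ μ (E i) := by
  obtain ⟨f, hf⟩ := Countable.exists_injective_nat ι
  obtain ⟨F, hF⟩ := exists_seq_of_forall_exists_union
    (P := fun n V => MeasurableSet V ∧ HasRoom μ C η {p | n ≤ f p} V)
    ⟨.empty, by simpa [HasRoom] using hpack⟩
    fun n V hV => hV.2.exists_next_stage hC hsmall hpack hf hV.1
  have hFi (i : ι) := (hF (f i)).2 i rfl
  have hlt {i j : ι} (h : f i < f j) : Disjoint (F (f i)) (F (f j)) :=
    disjoint_left.2 fun x hxi hxj => ((hFi j).1 hxj).2 (mem_iUnion₂.2 ⟨f i, h, hxi⟩)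
  refine ⟨fun i => F (f i), fun i => (hF (f i)).1, fun i => (hFi i).1.trans sdiff_subset,
    fun i j hij => ?_, fun i => (hFi i).2⟩
  rcases lt_or_gt_of_ne (hf.ne hij) with h | h
  · exact hlt h
  · exact (hlt h).symm

theorem mul_massWithin_le_of_pairwise_disjoint [Countable ι] {E : ι → Set X}
    (hEm : ∀ i, MeasurableSet (E i)) (hEC : ∀ i, E i ⊆ C i) (hdisj : Pairwise (Disjoint on E))
    (hE : ∀ i, η * μ (C i) ≤ μ (E i)) (B : Set X) : η * massWithin μ C univ B ≤ μ B := by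
  rw [massWithin_univ, ← ENNReal.tsum_mul_left]
  calc ∑' p : {p // C p ⊆ B}, η * μ (C p) ≤ ∑' p : {p // C p ⊆ B}, μ (E p) :=
        ENNReal.tsum_le_tsum fun p => hE p
    _ = μ (⋃ p : {p // C p ⊆ B}, E p) :=
        (measure_iUnion (f := fun p : {p // C p ⊆ B} => E p)
          (fun p q hpq => hdisj (Subtype.coe_injective.ne hpq)) fun p => hEm p).symm
    _ ≤ μ B := measure_mono (iUnion_subset fun p => (hEC p).trans p.2)

end LaminarFamily

namespace Dyadic

variable {d : ℕ}

theorem mem_dyadicCube_iff {j : ℤ} {k : Fin d → ℤ} {x : Fin d → ℝ} :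
    x ∈ dyadicCube d j k ↔ ∀ i, ⌊x i * 2 ^ j⌋ = k i := by
  have h2 : (0 : ℝ) < 2 ^ j := zpow_pos two_pos j
  refine forall_congr' fun i => ?_
  rw [Int.floor_eq_iff, zpow_neg, ← div_eq_mul_inv, ← div_eq_mul_inv, div_le_iff₀ h2,
    lt_div_iff₀ h2]

theorem mem_dyadicCube_floor (j : ℤ) (x : Fin d → ℝ) :
    x ∈ dyadicCube d j (fun i => ⌊x i * 2 ^ j⌋) :=
  mem_dyadicCube_iff.2 fun _ => rfl

theorem eq_of_mem_dyadicCube {j : ℤ} {k k' : Fin d → ℤ} {x : Fin d → ℝ}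
    (hk : x ∈ dyadicCube d j k) (hk' : x ∈ dyadicCube d j k') : k = k' :=
  funext fun i => (mem_dyadicCube_iff.1 hk i).symm.trans (mem_dyadicCube_iff.1 hk' i)

theorem dyadicCube_subset_ancestor {j j' : ℤ} (h : j ≤ j') (k' : Fin d → ℤ) :
    dyadicCube d j' k' ⊆ dyadicCube d j (fun i => k' i / 2 ^ (j' - j).toNat) := by
  intro x hx
  rw [mem_dyadicCube_iff] at hx ⊢
  intro i
  have hscale : x i * 2 ^ j = x i * 2 ^ j' / ((2 ^ (j' - j).toNat : ℕ) : ℝ) := by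
    rw [Nat.cast_pow, Nat.cast_ofNat, ← zpow_natCast, Int.toNat_of_nonneg (by omega),
      mul_div_assoc, ← zpow_sub₀ two_ne_zero, Int.sub_sub_self]
  rw [hscale, Int.floor_div_natCast, hx i]
  push_cast
  rfl

theorem dyadicCube_subset_or_disjoint {j j' : ℤ} (h : j ≤ j') (k k' : Fin d → ℤ) :
    dyadicCube d j' k' ⊆ dyadicCube d j k ∨ Disjoint (dyadicCube d j' k') (dyadicCube d j k) := by
  refine or_iff_not_imp_right.2 fun hmeet => ?_
  obtain ⟨x, hx', hx⟩ := Set.not_disjoint_iff.1 hmeet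
  rw [eq_of_mem_dyadicCube hx (dyadicCube_subset_ancestor h k' hx')]
  exact dyadicCube_subset_ancestor h k'

theorem dCube_subset_or_subset_or_disjoint (p q : ℤ × (Fin d → ℤ)) :
    dCube d p ⊆ dCube d q ∨ dCube d q ⊆ dCube d p ∨ Disjoint (dCube d p) (dCube d q) := by
  rcases le_total q.1 p.1 with h | h
  · exact (dyadicCube_subset_or_disjoint h q.2 p.2).imp_right Or.inr
  · rcases dyadicCube_subset_or_disjoint h p.2 q.2 with h' | h'
    · exact Or.inr (Or.inl h')
    · exact Or.inr (Or.inr h'.symm)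

theorem dyadicCube_eq_pi (j : ℤ) (k : Fin d → ℤ) :
    dyadicCube d j k =
      Set.univ.pi fun i => Set.Ico ((k i : ℝ) * 2 ^ (-j)) ((k i + 1) * 2 ^ (-j)) := by
  ext x
  simp [dyadicCube]

theorem measurableSet_dyadicCube (j : ℤ) (k : Fin d → ℤ) : MeasurableSet (dyadicCube d j k) := by
  rw [dyadicCube_eq_pi]
  exact MeasurableSet.univ_pi fun _ => measurableSet_Ico

theorem volume_dyadicCube (j : ℤ) (k : Fin d → ℤ) :
    volume (dyadicCube d j k) = ENNReal.ofReal (2 ^ (-j)) ^ d := by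
  have hside (i : Fin d) : ((k i : ℝ) + 1) * 2 ^ (-j) - k i * 2 ^ (-j) = 2 ^ (-j) := by ring
  simp only [dyadicCube_eq_pi, volume_pi_pi, Real.volume_Ico, hside, Finset.prod_const,
    Finset.card_univ, Fintype.card_fin]

theorem volume_dyadicCube_ne_top (j : ℤ) (k : Fin d → ℤ) : volume (dyadicCube d j k) ≠ ∞ := by
  rw [volume_dyadicCube]
  exact pow_ne_top ofReal_ne_top

theorem volume_dyadicCube_natCast_le (hd : 1 ≤ d) (n : ℕ) (k : Fin d → ℤ) :
    volume (dyadicCube d n k) ≤ 2⁻¹ ^ n := by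
  have hside : ENNReal.ofReal (2 ^ (-(n : ℤ))) = 2⁻¹ ^ n := by
    rw [zpow_neg, zpow_natCast, ← inv_pow, ofReal_pow (by norm_num), ofReal_inv_of_pos two_pos,
      ofReal_ofNat]
  rw [volume_dyadicCube, hside]
  calc (2⁻¹ ^ n : ℝ≥0∞) ^ d ≤ (2⁻¹ ^ n) ^ 1 :=
        pow_le_pow_of_le_one zero_le (pow_le_one₀ zero_le (by norm_num)) hd
    _ = 2⁻¹ ^ n := pow_one _

theorem isLaminarFamily_dCube {ι : Type*} (g : ι → ℤ × (Fin d → ℤ)) :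
    IsLaminarFamily volume fun p => dCube d (g p) :=
  ⟨fun _ => measurableSet_dyadicCube _ _, fun _ => volume_dyadicCube_ne_top _ _,
    fun _ _ => dCube_subset_or_subset_or_disjoint _ _⟩

theorem hasSmallSubsets_volume (hd : 1 ≤ d) : HasSmallSubsets (volume : Measure (Fin d → ℝ)) := by
  intro A hA hA0 ε hε
  obtain ⟨n, hn⟩ := ENNReal.exists_inv_two_pow_lt hε
  obtain ⟨k, hk⟩ : ∃ k, volume (A ∩ dyadicCube d n k) ≠ 0 := by
    by_contra! h
    refine hA0 (measure_mono_null (fun x hx => ?_) (measure_iUnion_null h))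
    exact Set.mem_iUnion.2 ⟨_, hx, mem_dyadicCube_floor n x⟩
  exact ⟨_, Set.inter_subset_left, hA.inter (measurableSet_dyadicCube _ _), hk,
    (measure_mono Set.inter_subset_right).trans ((volume_dyadicCube_natCast_le hd n k).trans hn.le)⟩

end Dyadic

/-- **Verbitsky; Lerner–Nazarov.** For `Λ > 1`, a family `S` of standard
dyadic cubes is `Λ`-Carleson (`∑_{P∈S, P⊆Q} |P| ≤ Λ|Q|` for every dyadic cube `Q`) if and
only if it is `(1/Λ)`-sparse. -/
theorem carleson_iff_sparse (d : ℕ) (hd : 1 ≤ d) (Λ : ℝ) (hΛ : 1 < Λ)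
    (S : Set (ℤ × (Fin d → ℤ))) :
    (∀ q : ℤ × (Fin d → ℤ),
      ∑' r : {r // r ∈ S ∧ dCube d r ⊆ dCube d q}, volume (dCube d r.1)
        ≤ ENNReal.ofReal Λ * volume (dCube d q))
    ↔ IsSparse d (1 / Λ) S := by
  have hΛη : ENNReal.ofReal Λ * ENNReal.ofReal (1 / Λ) = 1 := by
    rw [← ofReal_mul (by linarith), mul_one_div_cancel (by linarith), ofReal_one]
  have hmass (B : Set (Fin d → ℝ)) : massWithin volume (fun r : S => dCube d r.1) Set.univ B =
      ∑' r : {r // r ∈ S ∧ dCube d r ⊆ B}, volume (dCube d r.1) := by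
    rw [massWithin_univ]
    exact (Equiv.subtypeSubtypeEquivSubtypeInter (· ∈ S) (dCube d · ⊆ B)).tsum_eq
      fun r => volume (dCube d r.1)
  constructor
  · intro hcar
    refine exists_disjoint_subsets_of_packing (Dyadic.isLaminarFamily_dCube Subtype.val)
      (Dyadic.hasSmallSubsets_volume hd) fun q => ?_
    calc ENNReal.ofReal (1 / Λ) * massWithin volume _ Set.univ (dCube d q.1)
        ≤ ENNReal.ofReal (1 / Λ) * (ENNReal.ofReal Λ * volume (dCube d q.1)) :=
          mul_le_mul' le_rfl ((hmass _).trans_le (hcar q.1))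
      _ = volume (dCube d q.1) := by rw [← mul_assoc, mul_comm (ENNReal.ofReal _), hΛη, one_mul]
  · rintro ⟨E, hEm, hEC, hdisj, hE⟩ q
    rw [← hmass, ← one_mul (massWithin _ _ _ _), ← hΛη, mul_assoc]
    exact mul_le_mul' le_rfl (mul_massWithin_le_of_pairwise_disjoint hEm hEC hdisj hE _)

end
end
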